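/- Let V be a finite-dimensional complex vector space with a nondegenerate bilinear form B that is either symmetric or alternating, and let C and C' be bijective endomorphisms of V, both skew-symmetric with respect to B. Then C and C' are conjugate by an isometry of (V, B) (i.e. there is an isometry P with C' = P ∘ C ∘ P⁻¹) if and only if C and C' are similar, i.e. conjugate by some invertible linear map of V. (This is the content of Proposition 1.4.4: invertible adjoint orbits of o(m) under O(m), and of sp(2n) under Sp(2n), are parametrized exactly by the Jordan-form data (Λ, m, d).) -/

import Mathlib

/-!
If `P` conjugates `C` to `C'`, let `M = P^† P` be the Gram operator, `B (M x) y = B (P x) (P y)`.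
Since `B` is symmetric or alternating, `M` is self-adjoint; it is invertible, and the
skew-adjointness of `C` and `C'` makes it commute with `C`. The minimal polynomial of `M` is prime
to `X`, so by Hensel's lemma on each primary factor and the Chinese remainder theorem, `X` is a
square modulo it: `M = S²` with `S` a polynomial in `M`. Hence `S` is self-adjoint, invertible and
commutes with `C`, and `Q = P S⁻¹` is an isometry with `Q C Q⁻¹ = P C P⁻¹ = C'`.
-/

open Polynomial

section SquareRoots

variable {R : Type*} [CommRing R]

theorem exists_mul_dvd_sq_sub {a b x p q : R} (hab : IsCoprime a b)
    (hp : a ∣ p ^ 2 - x) (hq : b ∣ q ^ 2 - x) : ∃ r, a * b ∣ r ^ 2 - x := by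
  obtain ⟨u, v, huv⟩ := id hab
  -- `r ≡ p` modulo `a` and `r ≡ q` modulo `b`
  set r := p * (v * b) + q * (u * a) with hr
  refine ⟨r, hab.mul_dvd ?_ ?_⟩
  · have : r ^ 2 - x = (p ^ 2 - x) + a * (u * (q - p) * (r + p)) := by
      linear_combination (r + p) * hr + (r + p) * p * huv
    rw [this]
    exact dvd_add hp (dvd_mul_right _ _)
  · have : r ^ 2 - x = (q ^ 2 - x) + b * (v * (p - q) * (r + q)) := by
      linear_combination (r + q) * hr + (r + q) * q * huv
    rw [this]
    exact dvd_add hq (dvd_mul_right _ _)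

theorem exists_pow_dvd_sq_sub {π a p : R} (ha : IsCoprime π (2 * a)) (hp : π ∣ p ^ 2 - a)
    (k : ℕ) : ∃ q, π ^ k ∣ q ^ 2 - a := by
  suffices ∀ k, ∃ q, π ^ (k + 1) ∣ q ^ 2 - a from
    (this k).imp fun q hq => (pow_dvd_pow π k.le_succ).trans hq
  intro k
  induction k with
  | zero => exact ⟨p, by rwa [pow_one]⟩
  | succ k ih =>
    obtain ⟨q, d, hd⟩ := ih
    have hq : IsCoprime π (2 * q) := by
      have : 2 * q * q = 2 * a + π * (2 * π ^ k * d) := by linear_combination 2 * hd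
      exact (this ▸ ha.add_mul_left_right _).of_mul_right_left
    obtain ⟨u, v, huv⟩ := hq
    -- Newton's step `q ↦ q - (q² - a) / (2q)`, with `v` an inverse of `2q` modulo `π`.
    refine ⟨q - v * (q ^ 2 - a), u * d + v ^ 2 * d ^ 2 * π ^ k, ?_⟩
    linear_combination
      (-(q ^ 2 - a)) * huv + (u * π + v ^ 2 * (q ^ 2 - a + π ^ (k + 1) * d)) * hd

end SquareRoots

section AlgClosed

variable {K : Type*} [Field K] [IsAlgClosed K]

theorem Polynomial.exists_dvd_sq_sub_of_irreducible {π : K[X]} (hπ : Irreducible π) (a : K[X]) :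
    ∃ p, π ∣ p ^ 2 - a := by
  obtain ⟨l, hl⟩ := IsAlgClosed.exists_root π (degree_pos_of_irreducible hπ).ne'
  obtain ⟨c, hc⟩ := IsAlgClosed.exists_eq_mul_self (a.eval l)
  have hπl : π ∣ X - C l := (irreducible_X_sub_C l).dvd_symm hπ (dvd_iff_isRoot.mpr hl)
  exact ⟨C c, hπl.trans (dvd_iff_isRoot.mpr (by simp [hc, sq]))⟩

theorem Polynomial.exists_dvd_sq_sub_X {μ : K[X]} (hμ : IsCoprime μ (2 * X)) :
    ∃ q, μ ∣ q ^ 2 - X := by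
  induction μ using UniqueFactorizationMonoid.induction_on_coprime with
  | h0 =>
    exact (not_isUnit_X (isUnit_of_mul_isUnit_right (isCoprime_zero_left.mp hμ))).elim
  | h1 hu => exact ⟨0, hu.dvd⟩
  | hpr i hπ =>
    rcases i.eq_zero_or_pos with rfl | hi
    · exact ⟨0, by simp⟩
    · obtain ⟨p, hp⟩ := exists_dvd_sq_sub_of_irreducible hπ.irreducible X
      exact exists_pow_dvd_sq_sub (hμ.of_isCoprime_of_dvd_left (dvd_pow_self _ hi.ne')) hp i
  | hcp hxy hx hy =>
    obtain ⟨p, hp⟩ := hx hμ.of_mul_left_left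
    obtain ⟨q, hq⟩ := hy hμ.of_mul_left_right
    exact exists_mul_dvd_sq_sub (isRelPrime_iff_isCoprime.mp hxy) hp hq

theorem Module.End.exists_aeval_mul_self_eq [NeZero (2 : K)] {V : Type*} [AddCommGroup V]
    [Module K V] [FiniteDimensional K V] {M : Module.End K V} (hM : Function.Injective M) :
    ∃ p : K[X], aeval M p * aeval M p = M := by
  have hroot : ¬ (minpoly K M).IsRoot 0 :=
    ((LinearMap.not_hasEigenvalue_zero_tfae M).out 5 1).mp ((injective_iff_map_eq_zero M).mp hM)
  have hX : IsCoprime (minpoly K M) X :=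
    (irreducible_X.coprime_iff_not_dvd.mpr (by rwa [X_dvd_iff, coeff_zero_eq_eval_zero])).symm
  have h2 : IsUnit (2 : K[X]) := by
    rw [← map_ofNat C 2]; exact isUnit_C.mpr (IsUnit.mk0 _ two_ne_zero)
  obtain ⟨q, hq⟩ := exists_dvd_sq_sub_X ((isCoprime_mul_unit_left_right h2 _ _).mpr hX)
  have := minpoly.dvd_iff.mp hq
  refine ⟨q, ?_⟩
  rwa [map_sub, map_pow, aeval_X, sub_eq_zero, sq] at this

end AlgClosed

namespace LinearMap

section CommRing

variable {R M : Type*} [CommRing R] [AddCommGroup M] [Module R M] {B : LinearMap.BilinForm R M}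

theorem IsAdjointPair.swap (hB : (∀ x y, B x y = B y x) ∨ (∀ x y, B x y = -B y x))
    {f g : M → M} (h : IsAdjointPair B B f g) : IsAdjointPair B B g f := by
  intro x y
  rcases hB with hB | hB
  · rw [hB, ← h, hB]
  · rw [hB, ← h, hB, neg_neg]

theorem IsSelfAdjoint.pow {f : Module.End R M} (hf : B.IsSelfAdjoint ⇑f) (n : ℕ) :
    B.IsSelfAdjoint ⇑(f ^ n) := by
  induction n with
  | zero => exact isAdjointPair_one
  | succ n ih =>
    have := ih.mul hf
    rwa [← pow_succ, ← pow_succ'] at this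

theorem IsSelfAdjoint.aeval {f : Module.End R M} (hf : B.IsSelfAdjoint ⇑f) (p : R[X]) :
    B.IsSelfAdjoint ⇑(aeval f p) := by
  induction p using Polynomial.induction_on' with
  | add p q hp hq => rw [map_add]; exact hp.add hq
  | monomial n a => rw [aeval_monomial, ← Algebra.smul_def]; exact (hf.pow n).smul a

end CommRing

namespace BilinForm

variable {K V : Type*} [Field K] [AddCommGroup V] [Module K V] [FiniteDimensional K V]
  {B : LinearMap.BilinForm K V} (hB : B.Nondegenerate)

theorem leftAdjointOfNondegenerate_injective {φ : Module.End K V} (hφ : Function.Surjective φ) :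
    Function.Injective (B.leftAdjointOfNondegenerate hB φ) := by
  refine (injective_iff_map_eq_zero _).mpr fun x hx => hB.1 x fun y => ?_
  obtain ⟨z, rfl⟩ := hφ y
  rw [← isAdjointPairLeftAdjointOfNondegenerate B hB φ, hx, map_zero, LinearMap.zero_apply]

theorem leftAdjointOfNondegenerate_mul_eq_mul {φ C C' : Module.End K V} (hC : B.IsSkewAdjoint C)
    (hC' : B.IsSkewAdjoint C') (h : φ * C = C' * φ) :
    B.leftAdjointOfNondegenerate hB φ * C' = C * B.leftAdjointOfNondegenerate hB φ := by
  have hφ := isAdjointPairLeftAdjointOfNondegenerate B hB φ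
  replace hC : IsAdjointPair B B C ⇑(-C) := hC
  replace hC' : IsAdjointPair B B C' ⇑(-C') := hC'
  refine B.isAdjointPair_unique_of_nondegenerate hB (-C' * φ) _ _ (hφ.mul hC') ?_
  rw [neg_mul, ← h, ← mul_neg]
  exact hC.mul hφ

end BilinForm

end LinearMap

theorem Commute.aeval_left {R A : Type*} [CommSemiring R] [Semiring A] [Algebra R A] {a b : A}
    (h : Commute a b) (p : R[X]) : Commute (aeval a p) b := by
  induction p using Polynomial.induction_on' with
  | add p q hp hq => rw [map_add]; exact hp.add_left hq
  | monomial n r =>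
    rw [aeval_monomial]
    exact (Algebra.commute_algebraMap_left r b).mul_left (h.pow_left n)

theorem LinearMap.BilinForm.exists_isOrthogonal_conj_eq {K V : Type*} [Field K] [IsAlgClosed K]
    [NeZero (2 : K)] [AddCommGroup V] [Module K V] [FiniteDimensional K V]
    {B : LinearMap.BilinForm K V} (hB : B.Nondegenerate)
    (hBsa : (∀ x y, B x y = B y x) ∨ (∀ x y, B x y = -B y x))
    {C C' : Module.End K V} (hC : B.IsSkewAdjoint C) (hC' : B.IsSkewAdjoint C')
    {P : V ≃ₗ[K] V} (hP : P.conj C = C') :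
    ∃ Q : V ≃ₗ[K] V, B.IsOrthogonal Q ∧ Q.conj C = C' := by
  set φ : Module.End K V := P.toLinearMap
  set ψ := B.leftAdjointOfNondegenerate hB φ
  set M := ψ * φ
  have hψ : IsAdjointPair B B ψ φ := isAdjointPairLeftAdjointOfNondegenerate B hB φ
  have hφC : φ * C = C' * φ := by
    rw [← hP]; ext x; simp [φ]
  have hM_self : B.IsSelfAdjoint M := hψ.mul (hψ.swap hBsa)
  have hM_inj : Function.Injective M :=
    (leftAdjointOfNondegenerate_injective hB P.surjective).comp P.injective
  have hMC : Commute M C := by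
    calc M * C = ψ * C' * φ := by rw [mul_assoc, hφC, mul_assoc]
      _ = C * M := by rw [leftAdjointOfNondegenerate_mul_eq_mul hB hC hC' hφC, mul_assoc]
  obtain ⟨p, hp⟩ := Module.End.exists_aeval_mul_self_eq hM_inj
  set S := aeval M p
  have hS_self : B.IsSelfAdjoint S := hM_self.aeval p
  have hSC : Commute S C := hMC.aeval_left p
  have hS_inj : Function.Injective S := by
    refine Function.Injective.of_comp (f := S) ?_
    rw [← Module.End.coe_mul, hp]; exact hM_inj
  set T := LinearEquiv.ofInjectiveEndo S hS_inj
  refine ⟨T.symm.trans P, fun x y => ?_, ?_⟩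
  · have hT : ∀ z, S (T.symm z) = z := T.apply_symm_apply
    calc B (P (T.symm x)) (P (T.symm y)) = B (M (T.symm x)) (T.symm y) := (hψ _ _).symm
      _ = B (S (S (T.symm x))) (T.symm y) := by rw [← hp]; rfl
      _ = B x y := by rw [hS_self, hT, hT]
  · have hTC : T.symm.conj C = C := by
      ext z
      calc T.symm (C (T z)) = T.symm (T (C z)) :=
            congrArg T.symm (LinearMap.congr_fun hSC z).symm
        _ = C z := T.symm_apply_apply _
    rw [← LinearEquiv.conj_trans, LinearEquiv.trans_apply, hTC, hP]

theorem stmt2_general {V : Type*} [AddCommGroup V] [Module ℂ V] [FiniteDimensional ℂ V]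
    (B : LinearMap.BilinForm ℂ V) (hB : B.Nondegenerate)
    (hBsa : (∀ x y : V, B x y = B y x) ∨ (∀ x y : V, B x y = - B y x))
    (C C' : V →ₗ[ℂ] V)
    (hC : ∀ x y : V, B (C x) y = - B x (C y))
    (hC' : ∀ x y : V, B (C' x) y = - B x (C' y)) :
    (∃ P : V ≃ₗ[ℂ] V, (∀ x y : V, B (P x) (P y) = B x y) ∧
        ∀ x : V, C' x = P (C (P.symm x))) ↔
    (∃ P : V ≃ₗ[ℂ] V, ∀ x : V, C' x = P (C (P.symm x))) := by
  have hconj (P : V ≃ₗ[ℂ] V) : P.conj C = C' ↔ ∀ x, C' x = P (C (P.symm x)) :=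
    LinearMap.ext_iff.trans (forall_congr' fun _ => eq_comm)
  have hskew {D : V →ₗ[ℂ] V} (hD : ∀ x y : V, B (D x) y = - B x (D y)) :
      B.IsSkewAdjoint D := fun x y => by rw [hD, Pi.neg_apply, map_neg]
  refine ⟨fun ⟨P, _, hP⟩ => ⟨P, hP⟩, fun ⟨P, hP⟩ => ?_⟩
  obtain ⟨Q, hQ, hQC⟩ :=
    B.exists_isOrthogonal_conj_eq hB hBsa (hskew hC) (hskew hC') ((hconj P).mpr hP)
  exact ⟨Q, hQ, (hconj Q).mp hQC⟩

/-- For a nondegenerate symmetric or alternating form `B` on a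
finite-dimensional complex space and invertible skew-symmetric `C, C'`,
conjugacy by an isometry is equivalent to similarity. -/
theorem stmt2 {V : Type*} [AddCommGroup V] [Module ℂ V] [FiniteDimensional ℂ V]
    (B : LinearMap.BilinForm ℂ V) (hB : B.Nondegenerate)
    (hBsa : (∀ x y : V, B x y = B y x) ∨ (∀ x y : V, B x y = - B y x))
    (C C' : V →ₗ[ℂ] V)
    (hCbij : Function.Bijective C) (hC'bij : Function.Bijective C')
    (hC : ∀ x y : V, B (C x) y = - B x (C y))
    (hC' : ∀ x y : V, B (C' x) y = - B x (C' y)) :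
    (∃ P : V ≃ₗ[ℂ] V, (∀ x y : V, B (P x) (P y) = B x y) ∧
        ∀ x : V, C' x = P (C (P.symm x))) ↔
    (∃ P : V ≃ₗ[ℂ] V, ∀ x : V, C' x = P (C (P.symm x))) :=
  stmt2_general B hB hBsa C C' hC hC'
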